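/- arXiv:2503.08326 — 2 statements merged into one kernel-verified Lean document; each statement's English description precedes it below -/
import Mathlib

section
/- Let u : ℕ → ℚ be a sequence, and let p, q ∈ ℚ[X] be nonzero polynomials each of which is a characteristic polynomial for u from some index (say from N₁ and N₂ respectively). Then there exists an index N such that gcd(p, q) is a characteristic polynomial for u from index N. -/
/-- `p` is a characteristic polynomial for the sequence `u` from index `N`:
for every `m ≥ N`, `∑_{i=0}^{deg p} (coeff of x^i in p) * u (m + i) = 0`. -/
def IsCharPoly (u : ℕ → ℚ) (p : Polynomial ℚ) (N : ℕ) : Prop :=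
  ∀ m, N ≤ m → ∑ i ∈ Finset.range (p.natDegree + 1), p.coeff i * u (m + i) = 0

/-!
The polynomials `f` with `∑ᵢ fᵢ u(m + i) = 0` for all `m ≥ N` form an ideal of `R[X]`: it is
closed under addition, and multiplying `f` by `c Xᵏ` only rescales and shifts the recurrence
sum, so the vanishing from `N` on is preserved. By Bézout, `gcd p q = a p + b q` then lies in
this ideal (for `N = max N₁ N₂`) as soon as `p` and `q` do.
-/

open Polynomial

namespace Polynomial

variable {R : Type*} [CommSemiring R]

noncomputable def recurrenceSum (u : ℕ → R) (f : R[X]) (m : ℕ) : R :=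
  f.sum fun i c => c * u (m + i)

theorem recurrenceSum_eq_sum_range (u : ℕ → R) (f : R[X]) (m : ℕ) :
    recurrenceSum u f m = ∑ i ∈ Finset.range (f.natDegree + 1), f.coeff i * u (m + i) :=
  sum_over_range f fun _ => zero_mul _

theorem recurrenceSum_add (u : ℕ → R) (f g : R[X]) (m : ℕ) :
    recurrenceSum u (f + g) m = recurrenceSum u f m + recurrenceSum u g m :=
  sum_add_index f g _ (fun _ => zero_mul _) fun _ _ _ => add_mul _ _ _

theorem recurrenceSum_monomial (u : ℕ → R) (n : ℕ) (a : R) (m : ℕ) :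
    recurrenceSum u (monomial n a) m = a * u (m + n) :=
  sum_monomial_index a _ (zero_mul _)

theorem recurrenceSum_monomial_mul (u : ℕ → R) (n : ℕ) (a : R) (f : R[X]) (m : ℕ) :
    recurrenceSum u (monomial n a * f) m = a * recurrenceSum u f (m + n) := by
  induction f using Polynomial.induction_on' with
  | add g h hg hh => rw [mul_add, recurrenceSum_add, recurrenceSum_add, hg, hh, mul_add]
  | monomial k c =>
    rw [monomial_mul_monomial, recurrenceSum_monomial, recurrenceSum_monomial, mul_assoc,
      add_assoc]

noncomputable def recurrenceIdeal (u : ℕ → R) (N : ℕ) : Ideal R[X] where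
  carrier := {f | ∀ m, N ≤ m → recurrenceSum u f m = 0}
  zero_mem' _ _ := sum_zero_index _
  add_mem' {f g} hf hg m hm := by rw [recurrenceSum_add, hf m hm, hg m hm, add_zero]
  smul_mem' r f hf := by
    induction r using Polynomial.induction_on' with
    | add g h hg hh =>
      intro m hm
      rw [smul_eq_mul, add_mul, recurrenceSum_add, ← smul_eq_mul, ← smul_eq_mul, hg m hm,
        hh m hm, add_zero]
    | monomial k c =>
      intro m hm
      rw [smul_eq_mul, recurrenceSum_monomial_mul, hf (m + k) (hm.trans (Nat.le_add_right _ _)),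
        mul_zero]

theorem mem_recurrenceIdeal {u : ℕ → R} {N : ℕ} {f : R[X]} :
    f ∈ recurrenceIdeal u N ↔ ∀ m, N ≤ m → recurrenceSum u f m = 0 :=
  Iff.rfl

theorem recurrenceIdeal_monotone (u : ℕ → R) : Monotone (recurrenceIdeal u) :=
  fun _ _ hNM _ hf m hm => hf m (hNM.trans hm)

end Polynomial

theorem isCharPoly_iff_mem_recurrenceIdeal {u : ℕ → ℚ} {p : ℚ[X]} {N : ℕ} :
    IsCharPoly u p N ↔ p ∈ recurrenceIdeal u N := by
  simp only [IsCharPoly, mem_recurrenceIdeal, recurrenceSum_eq_sum_range]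

theorem charPoly_gcd_general (u : ℕ → ℚ) (p q : Polynomial ℚ)
    (N₁ N₂ : ℕ) (hp : IsCharPoly u p N₁) (hq : IsCharPoly u q N₂) :
    ∃ N : ℕ, IsCharPoly u (gcd p q) N := by
  obtain ⟨a, b, hbezout⟩ := exists_gcd_eq_mul_add_mul p q
  have hp' : p ∈ recurrenceIdeal u (max N₁ N₂) :=
    recurrenceIdeal_monotone u (le_max_left _ _) (isCharPoly_iff_mem_recurrenceIdeal.mp hp)
  have hq' : q ∈ recurrenceIdeal u (max N₁ N₂) :=
    recurrenceIdeal_monotone u (le_max_right _ _) (isCharPoly_iff_mem_recurrenceIdeal.mp hq)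
  refine ⟨max N₁ N₂, isCharPoly_iff_mem_recurrenceIdeal.mpr ?_⟩
  rw [hbezout]
  exact Ideal.add_mem _ (Ideal.mul_mem_right a _ hp') (Ideal.mul_mem_right b _ hq')

theorem charPoly_gcd (u : ℕ → ℚ) (p q : Polynomial ℚ) (hp0 : p ≠ 0) (hq0 : q ≠ 0)
    (N₁ N₂ : ℕ) (hp : IsCharPoly u p N₁) (hq : IsCharPoly u q N₂) :
    ∃ N : ℕ, IsCharPoly u (gcd p q) N :=
  charPoly_gcd_general u p q N₁ N₂ hp hq
end

section
/- Let N, d be positive integers and n₀, n₁ natural numbers with n₁ ≥ n₀ + d. Suppose u⁽¹⁾, …, u⁽ᴺ⁾ : ℕ → ℚ are sequences and f⁽¹⁾, …, f⁽ᴺ⁾ : ℚᴺ → ℚ are linear maps such that u⁽ⁱ⁾(n) = f⁽ⁱ⁾(u⁽¹⁾(n−1), …, u⁽ᴺ⁾(n−1)) for all n ≥ n₀ and all 1 ≤ i ≤ N. Suppose g : ℚ^{d+1} → ℚ is a linear map such that g(u⁽ⁱ⁾(n₁), u⁽ⁱ⁾(n₁−1), …, u⁽ⁱ⁾(n₁−d))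 = 0 for all 1 ≤ i ≤ N. Then g(u⁽ⁱ⁾(n), u⁽ⁱ⁾(n−1), …, u⁽ⁱ⁾(n−d)) = 0 for all n ≥ n₁ and all 1 ≤ i ≤ N. -/
theorem recurrence_propagates (N d : ℕ) (hN : 0 < N) (hd : 0 < d)
    (n₀ n₁ : ℕ) (hn₁ : n₀ + d ≤ n₁)
    (u : Fin N → ℕ → ℚ)
    (f : Fin N → ((Fin N → ℚ) →ₗ[ℚ] ℚ))
    (hrec : ∀ n : ℕ, n₀ ≤ n + 1 → ∀ i : Fin N, u i (n + 1) = f i (fun j => u j n))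
    (g : (Fin (d + 1) → ℚ) →ₗ[ℚ] ℚ)
    (hg : ∀ i : Fin N, g (fun j => u i (n₁ - (j : ℕ))) = 0) :
    ∀ n : ℕ, n₁ ≤ n → ∀ i : Fin N, g (fun j => u i (n - (j : ℕ))) = 0 := by
  intro n hn
  induction n, hn using Nat.le_induction with
  | base => exact hg
  | succ n hn ih =>
    intro i
    have hrw : (fun j : Fin (d+1) => u i (n + 1 - (j:ℕ)))
        = fun j : Fin (d+1) => f i (fun k => u k (n - (j:ℕ))) := by
      funext j
      have hj : (j:ℕ) ≤ d := Nat.lt_succ_iff.mp j.isLt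
      have h1 : n + 1 - (j:ℕ) = (n - (j:ℕ)) + 1 := by omega
      rw [h1, hrec (n - (j:ℕ)) (by omega) i]
    rw [hrw]
    have h2 : (fun j : Fin (d+1) => f i (fun k => u k (n - (j:ℕ))))
        = ∑ k, f i (Pi.single k 1) • (fun j : Fin (d+1) => u k (n - (j:ℕ))) := by
      funext j
      rw [LinearMap.pi_apply_eq_sum_univ (f i)]
      have hps : ∀ x : Fin N, (Pi.single x 1 : Fin N → ℚ) = fun l => if x = l then 1 else 0 := by
        intro x; funext l; simp [Pi.single_apply, eq_comm]
      simp [Finset.sum_apply, mul_comm, hps]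
    rw [h2, map_sum]
    simp [ih]
end
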